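/- There exists a continuous function f : Δ → ℂ on the closed unit disk Δ = { w ∈ ℂ : |w| ≤ 1 } such that S_f is homeomorphic to the cylinder S¹ × [0,1]. (One may take f(x + iy) = (−2|x| + √(1 − y²)) + iy for x + iy ∈ Δ.) -/

import Mathlib

/-- For a continuous `f : X → ℂ`, `S_f` is the subspace of `X × ℂ` of pairs `(x, w)`
with `w² = f x`. -/
abbrev SqrtSurface {X : Type*} [TopologicalSpace X] (f : C(X, ℂ)) : Type _ :=
  { q : X × ℂ // q.2 ^ 2 = f q.1 }

open Complex Metric Set Bornology in
/-- there is a continuous function `f` on the closed unit disk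
`Δ = {w : ℂ | ‖w‖ ≤ 1}` such that `S_f` is homeomorphic to the cylinder `S¹ × [0,1]`. -/
theorem exists_disk_function_with_cylinder_sqrtSurface :
    ∃ f : C((Metric.closedBall (0 : ℂ) 1 : Set ℂ), ℂ),
      Nonempty (SqrtSurface f ≃ₜ Circle × unitInterval) := by
  set Q : Set ℂ := Icc (-1:ℝ) 1 ×ℂ Icc (0:ℝ) 1 with hQdef
  have hQc : Convex ℝ Q := by
    rw [hQdef, Complex.reProdIm]
    exact ((convex_Icc _ _).linear_preimage Complex.reLm).inter
      ((convex_Icc _ _).linear_preimage Complex.imLm)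
  have hQint : (interior Q).Nonempty := by
    rw [hQdef, Complex.interior_reProdIm, interior_Icc, interior_Icc]
    refine ⟨Complex.I / 2, ?_, ?_⟩
    · simp
    · simp; norm_num
  have hQbd : IsBounded Q := (isBounded_Icc _ _).reProdIm (isBounded_Icc _ _)
  obtain ⟨h, -, hcl, -⟩ :=
    exists_homeomorph_image_interior_closure_frontier_eq_unitBall hQc hQint hQbd
  rw [(isClosed_Icc.reProdIm isClosed_Icc).closure_eq] at hcl
  have hsymm : ∀ z : (Metric.closedBall (0:ℂ) 1 : Set ℂ), h.symm ↑z ∈ Q := by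
    intro z
    obtain ⟨q, hq, hqz⟩ := hcl.symm.subset z.2
    have : h.symm ↑z = q := h.symm_apply_eq.mpr hqz.symm
    exact this ▸ hq
  set f : C((Metric.closedBall (0 : ℂ) 1 : Set ℂ), ℂ) :=
    ⟨fun z => ((1 - ((h.symm ↑z).re) ^ 2 : ℝ) : ℂ),
      Complex.continuous_ofReal.comp <| continuous_const.sub
        ((Complex.continuous_re.comp (h.symm.continuous.comp continuous_subtype_val)).pow 2)⟩
    with hfdef
  have ha2 : ∀ z : (Metric.closedBall (0:ℂ) 1 : Set ℂ), (h.symm ↑z).re ^ 2 ≤ 1 := by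
    intro z
    have : (h.symm ↑z).re ∈ Icc (-1:ℝ) 1 := (hsymm z).1
    simp only [mem_Icc] at this
    nlinarith [this.1, this.2]
  have key : ∀ p : SqrtSurface f,
      (p.1.2).im = 0 ∧ (p.1.2).re ^ 2 = 1 - (h.symm ↑p.1.1).re ^ 2 := by
    intro p
    have hp := p.2
    simp only [hfdef, ContinuousMap.coe_mk] at hp
    have him : (p.1.2 ^ 2).im = 0 := by rw [hp, Complex.ofReal_im]
    have hre : (p.1.2 ^ 2).re = 1 - (h.symm ↑p.1.1).re ^ 2 := by rw [hp, Complex.ofReal_re]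
    rw [sq, Complex.mul_im] at him
    rw [sq, Complex.mul_re] at hre
    have ha := ha2 p.1.1
    rcases mul_eq_zero.1 (by linarith : (p.1.2).re * (p.1.2).im = 0) with h0 | h0
    · have h1 : (p.1.2).im = 0 := by nlinarith
      exact ⟨h1, by rw [← hre, h1, h0]; ring⟩
    · exact ⟨h0, by rw [← hre, h0]; ring⟩
  have hu : ∀ p : SqrtSurface f,
      (((h.symm ↑p.1.1).re : ℂ) + ((p.1.2).re : ℂ) * Complex.I) ∈ Submonoid.unitSphere ℂ := by
    intro p
    have hk := (key p).2
    show _ ∈ Metric.sphere (0:ℂ) 1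
    rw [mem_sphere_zero_iff_norm, Complex.norm_def, Complex.normSq_apply]
    simp only [Complex.add_re, Complex.ofReal_re, Complex.mul_re, Complex.I_re,
      Complex.I_im, Complex.ofReal_im, Complex.add_im, Complex.mul_im]
    rw [show ((h.symm ↑p.1.1).re + ((p.1.2).re * 0 - 0 * 1))
        * ((h.symm ↑p.1.1).re + ((p.1.2).re * 0 - 0 * 1))
        + (0 + ((p.1.2).re * 1 + 0 * 0)) * (0 + ((p.1.2).re * 1 + 0 * 0))
        = (h.symm ↑p.1.1).re ^ 2 + (p.1.2).re ^ 2 by ring, hk]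
    simp
  have htmem : ∀ p : SqrtSurface f, (h.symm ↑p.1.1).im ∈ unitInterval :=
    fun p => (hsymm p.1.1).2
  have hq : ∀ (c : Circle) (t : unitInterval),
      (((c:ℂ).re : ℂ) + ((t:ℝ) : ℂ) * Complex.I) ∈ Q := by
    intro c t
    rw [hQdef, Complex.mem_reProdIm]
    have h1 : |(c:ℂ).re| ≤ 1 := by
      calc |(c:ℂ).re| ≤ ‖(c:ℂ)‖ := Complex.abs_re_le_norm _
        _ = 1 := Circle.norm_coe c
    constructor
    · simp only [Complex.add_re, Complex.ofReal_re, Complex.mul_re, Complex.I_re, Complex.I_im,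
        Complex.ofReal_im, mem_Icc]
      constructor <;> [linarith [abs_le.1 h1 |>.1]; linarith [abs_le.1 h1 |>.2]]
    · simp only [Complex.add_im, Complex.ofReal_im, Complex.mul_im, Complex.I_re, Complex.I_im,
        Complex.ofReal_re]
      rw [show (0:ℝ) + ((t:ℝ) * 1 + 0 * 0) = (t:ℝ) by ring]
      exact t.2
  have hzmem : ∀ (c : Circle) (t : unitInterval),
      h (((c:ℂ).re : ℂ) + ((t:ℝ) : ℂ) * Complex.I) ∈ Metric.closedBall (0:ℂ) 1 := by
    intro c t
    rw [← hcl]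
    exact mem_image_of_mem _ (hq c t)
  have hwmem : ∀ (c : Circle) (t : unitInterval),
      (((c:ℂ).im : ℂ)) ^ 2 = f ⟨h (((c:ℂ).re : ℂ) + ((t:ℝ) : ℂ) * Complex.I), hzmem c t⟩ := by
    intro c t
    simp only [hfdef, ContinuousMap.coe_mk, Homeomorph.symm_apply_apply]
    have hre : ((((c:ℂ).re : ℂ)) + ((t:ℝ) : ℂ) * Complex.I).re = (c:ℂ).re := by
      simp [Complex.add_re, Complex.mul_re]
    rw [hre]
    have hn : (c:ℂ).re ^ 2 + (c:ℂ).im ^ 2 = 1 := by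
      have := Complex.sq_norm (c:ℂ)
      rw [Circle.norm_coe, Complex.normSq_apply] at this
      nlinarith [this]
    norm_cast
    nlinarith [hn]
  refine ⟨f, ⟨{
    toFun := fun p => (⟨_, hu p⟩, ⟨_, htmem p⟩),
    invFun := fun ct => ⟨(⟨_, hzmem ct.1 ct.2⟩, (((ct.1:ℂ).im : ℂ))), hwmem ct.1 ct.2⟩,
    left_inv := ?_, right_inv := ?_,
    continuous_toFun := ?_, continuous_invFun := ?_ }⟩⟩
  · intro p
    apply Subtype.ext
    apply Prod.ext
    · apply Subtype.ext
      show h ((((((h.symm ↑p.1.1).re : ℂ) + ((p.1.2).re : ℂ) * Complex.I).re : ℝ) : ℂ)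
          + (((h.symm ↑p.1.1).im : ℝ) : ℂ) * Complex.I) = ↑p.1.1
      have e : (((((((h.symm ↑p.1.1).re : ℂ) + ((p.1.2).re : ℂ) * Complex.I).re : ℝ)) : ℂ)
          + (((h.symm ↑p.1.1).im : ℝ) : ℂ) * Complex.I) = h.symm ↑p.1.1 := by
        apply Complex.ext <;> simp
      rw [e, Homeomorph.apply_symm_apply]
    · show ((((((h.symm ↑p.1.1).re : ℂ) + ((p.1.2).re : ℂ) * Complex.I).im : ℝ)) : ℂ) = p.1.2
      apply Complex.ext
      · simp
      · simp [(key p).1]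
  · intro ct
    apply Prod.ext
    · apply Subtype.ext
      show (((h.symm (h _)).re : ℂ) + (((⟨(_, ((ct.1:ℂ).im : ℂ)), _⟩ : SqrtSurface f)).1.2.re : ℂ)
          * Complex.I) = (ct.1 : ℂ)
      simp only [Homeomorph.symm_apply_apply]
      apply Complex.ext <;> simp
    · apply Subtype.ext
      show (h.symm (h _)).im = (ct.2 : ℝ)
      simp only [Homeomorph.symm_apply_apply]
      simp
  · refine Continuous.prodMk (Continuous.subtype_mk ?_ _) (Continuous.subtype_mk ?_ _)
    · exact (Complex.continuous_ofReal.comp (Complex.continuous_re.comp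
        (h.symm.continuous.comp (continuous_subtype_val.comp
          (continuous_fst.comp continuous_subtype_val))))).add
        ((Complex.continuous_ofReal.comp (Complex.continuous_re.comp
          (continuous_snd.comp continuous_subtype_val))).mul continuous_const)
    · exact Complex.continuous_im.comp (h.symm.continuous.comp
        (continuous_subtype_val.comp (continuous_fst.comp continuous_subtype_val)))
  · refine Continuous.subtype_mk (Continuous.prodMk (Continuous.subtype_mk ?_ _) ?_) _
    · exact h.continuous.comp ((Complex.continuous_ofReal.comp
        (Complex.continuous_re.comp (continuous_subtype_val.comp continuous_fst))).add
        ((Complex.continuous_ofReal.comp (continuous_subtype_val.comp continuous_snd)).mul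
          continuous_const))
    · exact Complex.continuous_ofReal.comp (Complex.continuous_im.comp
        (continuous_subtype_val.comp continuous_fst))
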